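/- Let 1 < q < p < ∞ and let (S_k) be a semi-normalised block-diagonal sequence in K(ℓ_p, ℓ_q). Then (S_k) is equivalent to the unit vector basis of ℓ_r with r = pq/(p−q): there is a constant C ≥ 1 such that C⁻¹ (Σ_k |a_k|^r)^{1/r} ≤ ‖Σ_k a_k S_k‖ ≤ C (Σ_k |a_k|^r)^{1/r} for every finitely supported scalar sequence (a_k). -/

import Mathlib

open scoped ENNReal

noncomputable section

lemma memℓp_indicator {p : ℝ≥0∞} [Fact (1 ≤ p)] (s : Set ℕ) (x : lp (fun _ : ℕ => ℝ) p) :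
    Memℓp (s.indicator ⇑x) p := by
  have hle : ∀ i, ‖s.indicator ⇑x i‖ ≤ ‖x i‖ := by
    intro i
    by_cases h : i ∈ s
    · simp [Set.indicator_of_mem h]
    · simp [Set.indicator_of_notMem h]
  rcases eq_or_ne p ∞ with rfl | hp
  · obtain ⟨C, hC⟩ := (lp.memℓp x).bddAbove
    exact memℓp_infty ⟨C, by rintro _ ⟨i, rfl⟩; exact (hle i).trans (hC ⟨i, rfl⟩)⟩
  · have hp0 : 0 < p.toReal :=
      ENNReal.toReal_pos (lt_of_lt_of_le zero_lt_one Fact.out).ne' hp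
    apply memℓp_gen
    refine Summable.of_nonneg_of_le (fun i => ?_) (fun i => ?_) ((lp.memℓp x).summable hp0)
    · positivity
    · exact Real.rpow_le_rpow (norm_nonneg _) (hle i) hp0.le

/-- The coordinate projection onto a set `s` of indices, as a bounded operator on `ℓ^p`.
For `s = Set.Icc m n` this is the basis projection `Q^{(p)}_{[m,n]}`. -/
def lpIndicator (p : ℝ≥0∞) [Fact (1 ≤ p)] (s : Set ℕ) :
    lp (fun _ : ℕ => ℝ) p →L[ℝ] lp (fun _ : ℕ => ℝ) p :=
  LinearMap.mkContinuous
    { toFun := fun x => ⟨s.indicator ⇑x, memℓp_indicator s x⟩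
      map_add' := by
        intro x y
        apply lp.ext
        funext i
        by_cases h : i ∈ s
        · simp only [lp.coeFn_add]; exact congrFun (Set.indicator_add s _ _) i
        · exact congrFun (Set.indicator_add s _ _) i
      map_smul' := by
        intro c x
        apply lp.ext
        funext i
        by_cases h : i ∈ s
        · simp [Set.indicator_of_mem h, lp.coeFn_smul]
        · simp [Set.indicator_of_notMem h, lp.coeFn_smul] }
    1
    (by
      intro x
      rw [one_mul]
      have hle : ∀ i, ‖s.indicator ⇑x i‖ ≤ ‖x i‖ := by
        intro i
        by_cases h : i ∈ s
        · simp [Set.indicator_of_mem h]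
        · simp [Set.indicator_of_notMem h]
      rcases eq_or_ne p ∞ with rfl | hp
      · apply lp.norm_le_of_forall_le (norm_nonneg x)
        intro i
        exact (hle i).trans (lp.norm_apply_le_norm ENNReal.top_ne_zero x i)
      · have hp0 : 0 < p.toReal :=
          ENNReal.toReal_pos (lt_of_lt_of_le zero_lt_one Fact.out).ne' hp
        apply lp.norm_le_of_forall_sum_le hp0 (norm_nonneg x)
        intro t
        refine le_trans (Finset.sum_le_sum fun i _ => ?_) (lp.sum_rpow_le_norm_rpow hp0 x t)
        exact Real.rpow_le_rpow (norm_nonneg _) (hle i) hp0.le)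



lemma lpIndicator_apply {p : ℝ≥0∞} [Fact (1 ≤ p)] (s : Set ℕ) (x : lp (fun _ : ℕ => ℝ) p)
    (i : ℕ) : lpIndicator p s x i = s.indicator ⇑x i := rfl

lemma norm_lpIndicator_le {p : ℝ≥0∞} [Fact (1 ≤ p)] (s : Set ℕ) (x : lp (fun _ : ℕ => ℝ) p) :
    ‖lpIndicator p s x‖ ≤ ‖x‖ := by
  have h := (lpIndicator p s).le_of_opNorm_le (LinearMap.mkContinuous_norm_le _ zero_le_one _) x
  simpa using h

lemma lpIndicator_idem {p : ℝ≥0∞} [Fact (1 ≤ p)] (s : Set ℕ) (x : lp (fun _ : ℕ => ℝ) p) :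
    lpIndicator p s (lpIndicator p s x) = lpIndicator p s x := by
  apply lp.ext
  funext i
  rw [lpIndicator_apply]
  have : ⇑(lpIndicator p s x) = s.indicator ⇑x := funext fun j => lpIndicator_apply s x j
  rw [this, Set.indicator_indicator, Set.inter_self]

lemma lpIndicator_disjoint {p : ℝ≥0∞} [Fact (1 ≤ p)] {s t : Set ℕ} (h : Disjoint s t)
    (x : lp (fun _ : ℕ => ℝ) p) : lpIndicator p s (lpIndicator p t x) = 0 := by
  apply lp.ext
  funext i
  rw [lpIndicator_apply]
  have : ⇑(lpIndicator p t x) = t.indicator ⇑x := funext fun j => lpIndicator_apply t x j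
  rw [this, Set.indicator_indicator, Set.disjoint_iff_inter_eq_empty.mp h]
  simp [lp.coeFn_zero]

lemma norm_rpow_sum_disjoint {p : ℝ≥0∞} [Fact (1 ≤ p)] (hp : 0 < p.toReal)
    (t : Finset ℕ) (f : ℕ → lp (fun _ : ℕ => ℝ) p) (s : ℕ → Set ℕ)
    (hsupp : ∀ k ∈ t, ∀ i, i ∉ s k → f k i = 0)
    (hdisj : ∀ j ∈ t, ∀ k ∈ t, j ≠ k → Disjoint (s j) (s k)) :
    ‖∑ k ∈ t, f k‖ ^ p.toReal = ∑ k ∈ t, ‖f k‖ ^ p.toReal := by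
  rw [lp.norm_rpow_eq_tsum hp]
  have key : ∀ i, ‖(∑ k ∈ t, f k) i‖ ^ p.toReal = ∑ k ∈ t, ‖f k i‖ ^ p.toReal := by
    intro i
    have hcoe : (∑ k ∈ t, f k) i = ∑ k ∈ t, f k i := by
      rw [lp.coeFn_sum, Finset.sum_apply]
    by_cases hex : ∃ k₀ ∈ t, i ∈ s k₀
    · obtain ⟨k₀, hk₀t, hk₀⟩ := hex
      have hz : ∀ k ∈ t, k ≠ k₀ → f k i = 0 := by
        intro k hk hne
        refine hsupp k hk i fun hi => ?_
        exact (hdisj k hk k₀ hk₀t hne).ne_of_mem hi hk₀ rfl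
      rw [hcoe, Finset.sum_eq_single_of_mem k₀ hk₀t hz,
        Finset.sum_eq_single_of_mem k₀ hk₀t
          (fun k hk hne => by rw [hz k hk hne]; simp [Real.zero_rpow hp.ne'])]
    · push_neg at hex
      have hz : ∀ k ∈ t, f k i = 0 := fun k hk => hsupp k hk i (hex k hk)
      rw [hcoe, Finset.sum_eq_zero hz,
        Finset.sum_eq_zero (fun k hk => by rw [hz k hk]; simp [Real.zero_rpow hp.ne'])]
      simp [Real.zero_rpow hp.ne']
  calc ∑' i, ‖(∑ k ∈ t, f k) i‖ ^ p.toReal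
      = ∑' i, ∑ k ∈ t, ‖f k i‖ ^ p.toReal := tsum_congr key
    _ = ∑ k ∈ t, ∑' i, ‖f k i‖ ^ p.toReal :=
        Summable.tsum_finsetSum fun k _ => (lp.memℓp (f k)).summable hp
    _ = ∑ k ∈ t, ‖f k‖ ^ p.toReal :=
        Finset.sum_congr rfl fun k _ => (lp.norm_rpow_eq_tsum hp (f k)).symm

lemma sum_norm_lpIndicator_rpow_le {p : ℝ≥0∞} [Fact (1 ≤ p)] (hp : 0 < p.toReal)
    (t : Finset ℕ) (s : ℕ → Set ℕ)
    (hdisj : ∀ j ∈ t, ∀ k ∈ t, j ≠ k → Disjoint (s j) (s k))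
    (x : lp (fun _ : ℕ => ℝ) p) :
    ∑ k ∈ t, ‖lpIndicator p (s k) x‖ ^ p.toReal ≤ ‖x‖ ^ p.toReal := by
  rw [lp.norm_rpow_eq_tsum hp x]
  have h1 : ∀ k, ‖lpIndicator p (s k) x‖ ^ p.toReal
      = ∑' i, ‖(s k).indicator ⇑x i‖ ^ p.toReal := by
    intro k
    rw [lp.norm_rpow_eq_tsum hp]
    exact tsum_congr fun i => by rw [lpIndicator_apply]
  have hsummk : ∀ k ∈ t, Summable fun i => ‖(s k).indicator ⇑x i‖ ^ p.toReal :=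
    fun k _ => (memℓp_indicator (s k) x).summable hp
  have hpt : ∀ i, ∑ k ∈ t, ‖(s k).indicator ⇑x i‖ ^ p.toReal ≤ ‖x i‖ ^ p.toReal := by
    intro i
    by_cases hex : ∃ k₀ ∈ t, i ∈ s k₀
    · obtain ⟨k₀, hk₀t, hk₀⟩ := hex
      have : ∑ k ∈ t, ‖(s k).indicator ⇑x i‖ ^ p.toReal = ‖(s k₀).indicator ⇑x i‖ ^ p.toReal := by
        refine Finset.sum_eq_single_of_mem k₀ hk₀t fun k hk hne => ?_
        have hi : i ∉ s k := fun hi => (hdisj k hk k₀ hk₀t hne).ne_of_mem hi hk₀ rfl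
        rw [Set.indicator_of_notMem hi]
        simp [Real.zero_rpow hp.ne']
      rw [this, Set.indicator_of_mem hk₀]
    · push_neg at hex
      have : ∑ k ∈ t, ‖(s k).indicator ⇑x i‖ ^ p.toReal = 0 := by
        refine Finset.sum_eq_zero fun k hk => ?_
        rw [Set.indicator_of_notMem (hex k hk)]
        simp [Real.zero_rpow hp.ne']
      rw [this]
      positivity
  calc ∑ k ∈ t, ‖lpIndicator p (s k) x‖ ^ p.toReal
      = ∑ k ∈ t, ∑' i, ‖(s k).indicator ⇑x i‖ ^ p.toReal :=
        Finset.sum_congr rfl fun k _ => h1 k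
    _ = ∑' i, ∑ k ∈ t, ‖(s k).indicator ⇑x i‖ ^ p.toReal := (Summable.tsum_finsetSum hsummk).symm
    _ ≤ ∑' i, ‖x i‖ ^ p.toReal :=
        Summable.tsum_le_tsum hpt (summable_sum hsummk) ((lp.memℓp x).summable hp)

set_option maxHeartbeats 1000000 in
theorem statement7 (p q : ℝ≥0∞) [Fact (1 ≤ p)] [Fact (1 ≤ q)]
    (hq : 1 < q) (hqp : q < p) (hp : p < ∞)
    (S : ℕ → (lp (fun _ : ℕ => ℝ) p →L[ℝ] lp (fun _ : ℕ => ℝ) q))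
    -- the `S k` are compact operators, i.e. members of `K(ℓ_p, ℓ_q)`
    (hScompact : ∀ k, IsCompactOperator ⇑(S k))
    -- `(S k)` is block-diagonal with blocks `[l k, u k]`, `l k < u k < l (k+1)`
    (l u : ℕ → ℕ) (hlu : ∀ k, l k < u k) (hul : ∀ k, u k < l (k + 1))
    (hblock : ∀ k, S k = (lpIndicator q (Set.Icc (l k) (u k))).comp
      ((S k).comp (lpIndicator p (Set.Icc (l k) (u k)))))
    -- `(S k)` is semi-normalised
    (c : ℝ) (hc : 0 < c) (hcS : ∀ k, c ≤ ‖S k‖)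
    (C₀ : ℝ) (hSC : ∀ k, ‖S k‖ ≤ C₀) :
    -- conclusion: `(S k)` is equivalent to the unit vector basis of `ℓ_r`,
    -- `r = p q / (p - q)`
    ∃ C : ℝ, 1 ≤ C ∧ ∀ (s : Finset ℕ) (a : ℕ → ℝ),
      C⁻¹ * (∑ k ∈ s, |a k| ^ (p.toReal * q.toReal / (p.toReal - q.toReal))) ^
          (p.toReal * q.toReal / (p.toReal - q.toReal))⁻¹ ≤ ‖∑ k ∈ s, a k • S k‖ ∧
      ‖∑ k ∈ s, a k • S k‖ ≤ C * (∑ k ∈ s, |a k| ^ (p.toReal * q.toReal / (p.toReal - q.toReal))) ^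
          (p.toReal * q.toReal / (p.toReal - q.toReal))⁻¹ := by
  -- real exponents
  set P := p.toReal with hPdef
  set Q := q.toReal with hQdef
  set R := P * Q / (P - Q) with hRdef
  have hq' : q ≠ ∞ := (hqp.trans hp).ne
  have hp' : p ≠ ∞ := hp.ne
  have hQ1 : 1 < Q := by
    rw [hQdef, ← ENNReal.toReal_one]
    exact (ENNReal.toReal_lt_toReal ENNReal.one_ne_top hq').mpr hq
  have hQP : Q < P := (ENNReal.toReal_lt_toReal hq' hp').mpr hqp
  have hQ0 : 0 < Q := zero_lt_one.trans hQ1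
  have hP0 : 0 < P := hQ0.trans hQP
  have hPQ0 : 0 < P - Q := sub_pos.2 hQP
  have hPne : P ≠ 0 := hP0.ne'
  have hQne : Q ≠ 0 := hQ0.ne'
  have hPQne : P - Q ≠ 0 := hPQ0.ne'
  have hR0 : 0 < R := div_pos (mul_pos hP0 hQ0) hPQ0
  have hC₀ : 0 < C₀ := hc.trans_le ((hcS 0).trans (hSC 0))
  -- blocks are pairwise disjoint
  have hlmono : StrictMono l := strictMono_nat_of_lt_succ fun n => (hlu n).trans (hul n)
  have hdisjB : ∀ j k : ℕ, j ≠ k → Disjoint (Set.Icc (l j) (u j)) (Set.Icc (l k) (u k)) := by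
    have key : ∀ j k : ℕ, j < k → ∀ i, i ∈ Set.Icc (l j) (u j) →
        i ∈ Set.Icc (l k) (u k) → False := by
      intro j k hjk i hi1 hi2
      have h1 : u j < l k := (hul j).trans_le (hlmono.monotone hjk)
      simp only [Set.mem_Icc] at hi1 hi2
      omega
    intro j k hjk
    rw [Set.disjoint_left]
    intro i hi1 hi2
    rcases hjk.lt_or_gt with h | h
    · exact key j k h i hi1 hi2
    · exact key k j h i hi2 hi1
  -- support of S k x
  have hSsupp : ∀ k (x : lp (fun _ : ℕ => ℝ) p) (i : ℕ),
      i ∉ Set.Icc (l k) (u k) → (S k) x i = 0 := by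
    intro k x i hi
    conv_lhs => rw [hblock k]
    simp only [ContinuousLinearMap.comp_apply]
    rw [lpIndicator_apply, Set.indicator_of_notMem hi]
  have hSnorm : ∀ k x, ‖S k x‖ ≤ ‖S k‖ * ‖lpIndicator p (Set.Icc (l k) (u k)) x‖ := by
    intro k x
    conv_lhs => rw [hblock k]
    simp only [ContinuousLinearMap.comp_apply]
    exact (norm_lpIndicator_le _ _).trans ((S k).le_opNorm _)
  -- UPPER BOUND
  have upper : ∀ (s : Finset ℕ) (a : ℕ → ℝ),
      ‖∑ k ∈ s, a k • S k‖ ≤ C₀ * (∑ k ∈ s, |a k| ^ R) ^ R⁻¹ := by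
    intro s a
    have hAnn : (0:ℝ) ≤ ∑ k ∈ s, |a k| ^ R :=
      Finset.sum_nonneg fun k _ => Real.rpow_nonneg (abs_nonneg _) _
    set A := (∑ k ∈ s, |a k| ^ R) with hAdef
    refine ContinuousLinearMap.opNorm_le_bound _ (by positivity) fun x => ?_
    have hTx : (∑ k ∈ s, a k • S k) x = ∑ k ∈ s, a k • (S k x) := by
      simp [ContinuousLinearMap.sum_apply]
    rw [hTx]
    have hM : (0:ℝ) ≤ C₀ * A ^ R⁻¹ * ‖x‖ := by positivity
    rw [← Real.rpow_le_rpow_iff (norm_nonneg _) hM hQ0]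
    have hsupp : ∀ k ∈ s, ∀ i, i ∉ Set.Icc (l k) (u k) → (a k • S k x) i = 0 := by
      intro k _ i hi
      rw [lp.coeFn_smul, Pi.smul_apply, hSsupp k x i hi, smul_zero]
    have hQeq : ‖∑ k ∈ s, a k • S k x‖ ^ Q = ∑ k ∈ s, ‖a k • S k x‖ ^ Q :=
      norm_rpow_sum_disjoint hQ0 s _ _ hsupp (fun j _ k _ h => hdisjB j k h)
    rw [hQeq]
    set g : ℕ → ℝ := fun k => ‖lpIndicator p (Set.Icc (l k) (u k)) x‖ with hgdef
    have hgnn : ∀ k, 0 ≤ g k := fun k => norm_nonneg _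
    have step1 : ∑ k ∈ s, ‖a k • S k x‖ ^ Q
        ≤ C₀ ^ Q * ∑ k ∈ s, |a k| ^ Q * g k ^ Q := by
      rw [Finset.mul_sum]
      refine Finset.sum_le_sum fun k _ => ?_
      have h1 : ‖a k • S k x‖ ≤ |a k| * (C₀ * g k) := by
        rw [norm_smul, Real.norm_eq_abs]
        exact mul_le_mul_of_nonneg_left
          ((hSnorm k x).trans (mul_le_mul_of_nonneg_right (hSC k) (hgnn k))) (abs_nonneg _)
      calc ‖a k • S k x‖ ^ Q ≤ (|a k| * (C₀ * g k)) ^ Q :=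
            Real.rpow_le_rpow (norm_nonneg _) h1 hQ0.le
        _ = C₀ ^ Q * (|a k| ^ Q * g k ^ Q) := by
            rw [Real.mul_rpow (abs_nonneg _) (by positivity),
              Real.mul_rpow hC₀.le (hgnn k)]
            ring
    -- Hölder
    have hconj : Real.HolderConjugate (P / (P - Q)) (P / Q) := by
      rw [Real.holderConjugate_iff]
      constructor
      · rw [lt_div_iff₀ hPQ0]
        linarith
      · rw [inv_div, inv_div]
        field_simp
        ring
    have hold := Real.inner_le_Lp_mul_Lq_of_nonneg (s := s) hconj
      (f := fun k => |a k| ^ Q) (g := fun k => g k ^ Q)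
      (fun k _ => Real.rpow_nonneg (abs_nonneg _) _)
      (fun k _ => Real.rpow_nonneg (hgnn k) _)
    have e1 : ∀ k, (|a k| ^ Q) ^ (P / (P - Q)) = |a k| ^ R := by
      intro k
      rw [← Real.rpow_mul (abs_nonneg _), hRdef]
      congr 1
      field_simp
    have e2 : ∀ k, (g k ^ Q) ^ (P / Q) = g k ^ P := by
      intro k
      rw [← Real.rpow_mul (hgnn k)]
      congr 1
      field_simp
    simp only [e1, e2, one_div_div] at hold
    have sumg : ∑ k ∈ s, g k ^ P ≤ ‖x‖ ^ P :=
      sum_norm_lpIndicator_rpow_le hP0 s _ (fun j _ k _ h => hdisjB j k h) x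
    have hgP : (∑ k ∈ s, g k ^ P) ^ (Q / P) ≤ ‖x‖ ^ Q := by
      calc (∑ k ∈ s, g k ^ P) ^ (Q / P) ≤ (‖x‖ ^ P) ^ (Q / P) :=
            Real.rpow_le_rpow (Finset.sum_nonneg fun k _ => Real.rpow_nonneg (hgnn k) _)
              sumg (div_nonneg hQ0.le hP0.le)
        _ = ‖x‖ ^ Q := by
            rw [← Real.rpow_mul (norm_nonneg x)]
            congr 1
            field_simp
    have step2 : ∑ k ∈ s, |a k| ^ Q * g k ^ Q ≤ A ^ ((P - Q) / P) * ‖x‖ ^ Q := by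
      refine hold.trans ?_
      exact mul_le_mul_of_nonneg_left hgP (Real.rpow_nonneg hAnn _)
    have hRHS : (C₀ * A ^ R⁻¹ * ‖x‖) ^ Q = C₀ ^ Q * (A ^ ((P - Q) / P) * ‖x‖ ^ Q) := by
      rw [Real.mul_rpow (by positivity) (norm_nonneg x),
        Real.mul_rpow hC₀.le (Real.rpow_nonneg hAnn _),
        ← Real.rpow_mul hAnn]
      have : R⁻¹ * Q = (P - Q) / P := by
        rw [hRdef]
        field_simp
      rw [this, mul_assoc]
    rw [hRHS]
    exact step1.trans (mul_le_mul_of_nonneg_left step2 (Real.rpow_nonneg hC₀.le _))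
  -- LOWER BOUND
  have lower : ∀ (s : Finset ℕ) (a : ℕ → ℝ),
      c / 2 * (∑ k ∈ s, |a k| ^ R) ^ R⁻¹ ≤ ‖∑ k ∈ s, a k • S k‖ := by
    intro s a
    have hAnn : (0:ℝ) ≤ ∑ k ∈ s, |a k| ^ R :=
      Finset.sum_nonneg fun k _ => Real.rpow_nonneg (abs_nonneg _) _
    set A := (∑ k ∈ s, |a k| ^ R) with hAdef
    rcases eq_or_lt_of_le hAnn with hA0 | hA0
    · rw [← hA0, Real.zero_rpow (inv_ne_zero hR0.ne'), mul_zero]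
      exact norm_nonneg _
    -- norming vectors
    have hxk : ∀ k : ℕ, ∃ v : lp (fun _ : ℕ => ℝ) p, ‖v‖ ≤ 1 ∧ c / 2 ≤ ‖S k v‖ ∧
        lpIndicator p (Set.Icc (l k) (u k)) v = v := by
      intro k
      have hcon : ¬ ∀ y, ‖S k y‖ ≤ c / 2 * ‖y‖ := by
        intro hcon
        have := ContinuousLinearMap.opNorm_le_bound (S k) (by linarith) hcon
        linarith [hcS k]
      push_neg at hcon
      obtain ⟨y, hy⟩ := hcon
      have hy0 : y ≠ 0 := by
        rintro rfl
        rw [map_zero, norm_zero, norm_zero, mul_zero] at hy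
        exact lt_irrefl 0 hy
      have hny : (0:ℝ) < ‖y‖ := norm_pos_iff.mpr hy0
      set w := ‖y‖⁻¹ • y with hwdef
      have hnw : ‖w‖ = 1 := by
        rw [hwdef, norm_smul, norm_inv, norm_norm, inv_mul_cancel₀ hny.ne']
      have hSw : c / 2 ≤ ‖S k w‖ := by
        rw [hwdef, map_smul, norm_smul, norm_inv, norm_norm]
        have h1 : c / 2 = ‖y‖⁻¹ * (c / 2 * ‖y‖) := by
          field_simp
        rw [h1]
        exact mul_le_mul_of_nonneg_left hy.le (inv_nonneg.mpr hny.le)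
      refine ⟨lpIndicator p (Set.Icc (l k) (u k)) w, ?_, ?_, lpIndicator_idem _ _⟩
      · exact (norm_lpIndicator_le _ _).trans_eq hnw
      · have hSv : (S k) (lpIndicator p (Set.Icc (l k) (u k)) w) = S k w := by
          conv_lhs => rw [hblock k]
          conv_rhs => rw [hblock k]
          simp only [ContinuousLinearMap.comp_apply, lpIndicator_idem]
        rw [hSv]
        exact hSw
    choose v hv1 hv2 hv3 using hxk
    set m : ℕ → ℝ := fun k => ‖S k (v k)‖ with hmdef
    set t : ℕ → ℝ := fun k => |a k| * m k with htdef
    set b : ℕ → ℝ := fun k => t k ^ (R / P) with hbdef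
    have hmnn : ∀ k, 0 ≤ m k := fun k => norm_nonneg _
    have htnn : ∀ k, 0 ≤ t k := fun k => mul_nonneg (abs_nonneg _) (hmnn k)
    have hbnn : ∀ k, 0 ≤ b k := fun k => Real.rpow_nonneg (htnn k) _
    set e : ℕ → ℝ := fun k => if a k < 0 then (-1:ℝ) else 1 with hedef
    have hee : ∀ k, |e k| = 1 := by
      intro k
      simp only [hedef]
      split <;> simp
    have hae : ∀ k, a k * e k = |a k| := by
      intro k
      simp only [hedef]
      split
      · rw [abs_of_neg (by assumption)]
        ring
      · rw [abs_of_nonneg (by linarith [not_lt.mp (by assumption)])]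
        ring
    set w : lp (fun _ : ℕ => ℝ) p := ∑ k ∈ s, (e k * b k) • v k with hwdef
    -- S k kills v j for j ≠ k
    have hSvj : ∀ k j, j ≠ k → S k (v j) = 0 := by
      intro k j hne
      conv_lhs => rw [hblock k]
      simp only [ContinuousLinearMap.comp_apply]
      rw [← hv3 j, lpIndicator_disjoint (hdisjB k j (Ne.symm hne)), map_zero, map_zero]
    -- T w
    have hTw : (∑ k ∈ s, a k • S k) w = ∑ k ∈ s, (|a k| * b k) • S k (v k) := by
      have h0 : (∑ k ∈ s, a k • S k) w = ∑ k ∈ s, a k • (S k w) := by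
        simp [ContinuousLinearMap.sum_apply]
      rw [h0]
      refine Finset.sum_congr rfl fun k hk => ?_
      have hSkw : S k w = (e k * b k) • S k (v k) := by
        rw [hwdef, map_sum, Finset.sum_eq_single_of_mem k hk]
        · rw [map_smul]
        · intro j hj hne
          rw [map_smul, hSvj k j hne, smul_zero]
      rw [hSkw, smul_smul, ← mul_assoc, hae k]
    -- ‖T w‖ ^ Q
    have hexp1 : (1 + R / P) * Q = R := by
      rw [hRdef]
      field_simp
      ring
    have hk1 : ∀ k, ‖(|a k| * b k) • S k (v k)‖ ^ Q = t k ^ R := by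
      intro k
      rw [norm_smul, Real.norm_eq_abs, abs_of_nonneg (mul_nonneg (abs_nonneg _) (hbnn k))]
      have h1 : |a k| * b k * ‖S k (v k)‖ = t k * t k ^ (R / P) := by
        simp only [htdef, hbdef, hmdef]
        ring
      have h2 : t k * t k ^ (R / P) = t k ^ (1 + R / P) := by
        rw [Real.rpow_add' (htnn k) (by positivity), Real.rpow_one]
      rw [h1, h2, ← Real.rpow_mul (htnn k), hexp1]
    have hsuppSv : ∀ k ∈ s, ∀ i, i ∉ Set.Icc (l k) (u k) →
        ((|a k| * b k) • S k (v k)) i = 0 := by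
      intro k _ i hi
      rw [lp.coeFn_smul, Pi.smul_apply, hSsupp k (v k) i hi, smul_zero]
    set B := ∑ k ∈ s, t k ^ R with hBdef
    have hTwQ : ‖(∑ k ∈ s, a k • S k) w‖ ^ Q = B := by
      rw [hTw, norm_rpow_sum_disjoint hQ0 s _ _ hsuppSv (fun j _ k _ h => hdisjB j k h)]
      exact Finset.sum_congr rfl fun k _ => hk1 k
    -- ‖w‖ ^ P ≤ B
    have hsuppv : ∀ k ∈ s, ∀ i, i ∉ Set.Icc (l k) (u k) → ((e k * b k) • v k) i = 0 := by
      intro k _ i hi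
      have : (v k) i = 0 := by
        rw [← hv3 k, lpIndicator_apply, Set.indicator_of_notMem hi]
      rw [lp.coeFn_smul, Pi.smul_apply, this, smul_zero]
    have hwP : ‖w‖ ^ P ≤ B := by
      rw [hwdef, norm_rpow_sum_disjoint hP0 s _ _ hsuppv (fun j _ k _ h => hdisjB j k h)]
      refine Finset.sum_le_sum fun k _ => ?_
      have h1 : ‖(e k * b k) • v k‖ ≤ b k := by
        rw [norm_smul, Real.norm_eq_abs, abs_mul, hee k, one_mul,
          abs_of_nonneg (hbnn k)]
        calc b k * ‖v k‖ ≤ b k * 1 := mul_le_mul_of_nonneg_left (hv1 k) (hbnn k)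
          _ = b k := mul_one _
      calc ‖(e k * b k) • v k‖ ^ P ≤ b k ^ P :=
            Real.rpow_le_rpow (norm_nonneg _) h1 hP0.le
        _ = t k ^ R := by
            rw [hbdef]
            rw [← Real.rpow_mul (htnn k), div_mul_cancel₀ _ hPne]
    -- B bounds
    have hBA : (c / 2) ^ R * A ≤ B := by
      rw [hBdef, hAdef, Finset.mul_sum]
      refine Finset.sum_le_sum fun k _ => ?_
      have h1 : c / 2 * |a k| ≤ t k := by
        simp only [htdef]
        rw [mul_comm (c/2)]
        exact mul_le_mul_of_nonneg_left (hv2 k) (abs_nonneg _)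
      calc (c / 2) ^ R * |a k| ^ R = (c / 2 * |a k|) ^ R :=
            (Real.mul_rpow (by linarith) (abs_nonneg _)).symm
        _ ≤ t k ^ R := Real.rpow_le_rpow (by positivity) h1 hR0.le
    have hBpos : 0 < B := lt_of_lt_of_le (by positivity) hBA
    -- conclude
    have hTvnorm : ‖(∑ k ∈ s, a k • S k) w‖ = B ^ Q⁻¹ := by
      rw [← Real.rpow_rpow_inv (norm_nonneg ((∑ k ∈ s, a k • S k) w)) hQne, hTwQ]
    have hwn : ‖w‖ ≤ B ^ P⁻¹ := by
      calc ‖w‖ = (‖w‖ ^ P) ^ P⁻¹ := (Real.rpow_rpow_inv (norm_nonneg w) hPne).symm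
        _ ≤ B ^ P⁻¹ := Real.rpow_le_rpow (by positivity) hwP (inv_nonneg.mpr hP0.le)
    have hTle : B ^ Q⁻¹ ≤ ‖∑ k ∈ s, a k • S k‖ * B ^ P⁻¹ := by
      rw [← hTvnorm]
      exact ((∑ k ∈ s, a k • S k).le_opNorm w).trans
        (mul_le_mul_of_nonneg_left hwn (norm_nonneg _))
    have hexp2 : R⁻¹ = Q⁻¹ - P⁻¹ := by
      have h : Q⁻¹ - P⁻¹ = (P - Q) / (P * Q) := by
        rw [inv_eq_one_div, inv_eq_one_div, div_sub_div 1 1 hQne hPne, one_mul, mul_one,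
          mul_comm Q P]
      rw [hRdef, inv_div, h]
    have hBR : B ^ R⁻¹ ≤ ‖∑ k ∈ s, a k • S k‖ := by
      rw [hexp2, Real.rpow_sub hBpos, div_le_iff₀ (Real.rpow_pos_of_pos hBpos _)]
      exact hTle
    have hsplit : ((c / 2) ^ R * A) ^ R⁻¹ = c / 2 * A ^ R⁻¹ := by
      rw [Real.mul_rpow (by positivity) hAnn, Real.rpow_rpow_inv (by linarith) hR0.ne']
    calc c / 2 * A ^ R⁻¹ = ((c / 2) ^ R * A) ^ R⁻¹ := hsplit.symm
      _ ≤ B ^ R⁻¹ := Real.rpow_le_rpow (by positivity) hBA (inv_nonneg.mpr hR0.le)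
      _ ≤ _ := hBR
  -- assemble
  refine ⟨max (max C₀ (2 / c)) 1, le_max_right _ _, fun s a => ?_⟩
  have hAnn : (0:ℝ) ≤ (∑ k ∈ s, |a k| ^ R) ^ R⁻¹ :=
    Real.rpow_nonneg (Finset.sum_nonneg fun k _ => Real.rpow_nonneg (abs_nonneg _) _) _
  have hCge : (0:ℝ) < max (max C₀ (2 / c)) 1 := lt_of_lt_of_le one_pos (le_max_right _ _)
  constructor
  · refine le_trans ?_ (lower s a)
    refine mul_le_mul_of_nonneg_right ?_ hAnn
    have h2c : 0 < 2 / c := div_pos two_pos hc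
    have : (max (max C₀ (2 / c)) 1)⁻¹ ≤ (2 / c)⁻¹ :=
      inv_anti₀ h2c ((le_max_right C₀ (2/c)).trans (le_max_left _ 1))
    rw [inv_div] at this
    exact this
  · refine (upper s a).trans ?_
    exact mul_le_mul_of_nonneg_right ((le_max_left C₀ (2/c)).trans (le_max_left _ 1)) hAnn

end
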